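/- Every 2-dimensional Novikov superalgebra over ℂ is of type N. -/
import Mathlib


/-- A Novikov superalgebra over ℂ: a ℤ₂-graded vector space `V = A 0 ⊕ A 1`
with a bilinear product respecting the grading, satisfying the graded
left-symmetry and graded right-commutativity identities. -/
structure NovikovSuperAlgebra (V : Type*) [AddCommGroup V] [Module ℂ V] where
  mul : V →ₗ[ℂ] V →ₗ[ℂ] V
  grading : ZMod 2 → Submodule ℂ V
  spanning : ∀ x : V, ∃ x0 ∈ grading 0, ∃ x1 ∈ grading 1, x = x0 + x1
  indep : ∀ x : V, x ∈ grading 0 → x ∈ grading 1 → x = 0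
  mul_mem : ∀ i j : ZMod 2, ∀ u ∈ grading i, ∀ v ∈ grading j, mul u v ∈ grading (i + j)
  super_left_sym : ∀ i j : ZMod 2, ∀ u ∈ grading i, ∀ v ∈ grading j, ∀ w : V,
    mul (mul u v) w - mul u (mul v w)
      = ((-1 : ℂ) ^ (i.val * j.val)) • (mul (mul v u) w - mul v (mul u w))
  super_right_comm : ∀ i j : ZMod 2, ∀ u ∈ grading i, ∀ v ∈ grading j, ∀ w : V,
    mul (mul w u) v = ((-1 : ℂ) ^ (i.val * j.val)) • mul (mul w v) u

/-- The (ungraded) Novikov algebra identities for a bilinear product. -/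
def IsNovikovMul {V : Type*} [AddCommGroup V] [Module ℂ V]
    (mul : V →ₗ[ℂ] V →ₗ[ℂ] V) : Prop :=
  (∀ x y z : V, mul (mul x y) z - mul x (mul y z) = mul (mul y x) z - mul y (mul x z)) ∧
  (∀ x y z : V, mul (mul z x) y = mul (mul z y) x)

/-- Supercommutator of elements of parities `i`, `j`. -/
def sbr {V : Type*} [AddCommGroup V] [Module ℂ V]
    (mul : V →ₗ[ℂ] V →ₗ[ℂ] V) (i j : ZMod 2) (u v : V) : V :=
  mul u v - ((-1 : ℂ) ^ (i.val * j.val)) • mul v u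

/-- every 2-dimensional Novikov superalgebra over ℂ is of type N. -/
theorem dim2_type_N {V : Type*} [AddCommGroup V] [Module ℂ V] [FiniteDimensional ℂ V]
    (hdim : Module.finrank ℂ V = 2) (N : NovikovSuperAlgebra V) :
    IsNovikovMul N.mul := by
  -- key: for two odd elements the *ungraded* identities hold
  have key : ∀ u ∈ N.grading 1, ∀ v ∈ N.grading 1, ∀ w : V,
      (N.mul (N.mul u v) w - N.mul u (N.mul v w)
        = N.mul (N.mul v u) w - N.mul v (N.mul u w)) ∧
      (N.mul (N.mul w u) v = N.mul (N.mul w v) u) := by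
    intro u hu v hv w
    by_cases hI : LinearIndependent ℂ ![u, v]
    · -- then grading 1 = ⊤ and grading 0 = ⊥, all relevant products vanish
      have hsp : Submodule.span ℂ (Set.range ![u, v]) = ⊤ :=
        hI.span_eq_top_of_card_eq_finrank (by simp [hdim])
      have h1 : ∀ x : V, x ∈ N.grading 1 := by
        intro x
        have hle : Submodule.span ℂ (Set.range ![u, v]) ≤ N.grading 1 := by
          rw [Submodule.span_le]
          rintro y ⟨i, rfl⟩
          fin_cases i
          · simpa using hu
          · simpa using hv
        exact hle (hsp ▸ Submodule.mem_top)
      have h0 : ∀ x ∈ N.grading 0, x = 0 := fun x hx => N.indep x hx (h1 x)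
      have hz : ∀ a b : V, a ∈ N.grading 1 → b ∈ N.grading 1 → N.mul a b = 0 := by
        intro a b ha hb
        have h := N.mul_mem 1 1 a ha b hb
        have h2 : (1 + 1 : ZMod 2) = 0 := by decide
        rw [h2] at h
        exact h0 _ h
      constructor
      · simp [hz u v hu hv, hz v u hv hu, hz v w hv (h1 w), hz u w hu (h1 w)]
      · simp [hz w u (h1 w) hu, hz w v (h1 w) hv]
    · rw [LinearIndependent.pair_iff] at hI
      push_neg at hI
      obtain ⟨s, t, hst, hne⟩ := hI
      by_cases hs : s = 0
      · have ht : t ≠ 0 := fun h => hne hs h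
        have hv0 : v = 0 := by
          have h : t • v = 0 := by
            rw [hs, zero_smul, zero_add] at hst
            exact hst
          exact (smul_eq_zero.mp h).resolve_left ht
        subst hv0
        constructor <;> simp
      · have hu' : u = (-(t / s)) • v := by
          have h : s • u = -(t • v) := by
            rw [eq_neg_iff_add_eq_zero]; exact hst
          have := congrArg (fun z => s⁻¹ • z) h
          simp only [smul_smul, inv_mul_cancel₀ hs, one_smul] at this
          rw [this, smul_neg, smul_smul]
          rw [neg_smul, div_eq_mul_inv, mul_comm]
        subst hu'
        constructor <;> simp [map_smul, smul_sub, smul_comm]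
  -- the identities for homogeneous first and second arguments
  have hom : ∀ (i j : ZMod 2), ∀ u ∈ N.grading i, ∀ v ∈ N.grading j, ∀ w : V,
      (N.mul (N.mul u v) w - N.mul u (N.mul v w)
        = N.mul (N.mul v u) w - N.mul v (N.mul u w)) ∧
      (N.mul (N.mul w u) v = N.mul (N.mul w v) u) := by
    intro i j u hu v hv w
    fin_cases i <;> fin_cases j
    · refine ⟨?_, ?_⟩
      · simpa using N.super_left_sym 0 0 u hu v hv w
      · simpa using N.super_right_comm 0 0 u hu v hv w
    · refine ⟨?_, ?_⟩
      · simpa using N.super_left_sym 0 1 u hu v hv w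
      · simpa using N.super_right_comm 0 1 u hu v hv w
    · refine ⟨?_, ?_⟩
      · simpa using N.super_left_sym 1 0 u hu v hv w
      · simpa using N.super_right_comm 1 0 u hu v hv w
    · exact key u hu v hv w
  constructor
  · intro x y z
    obtain ⟨x0, hx0, x1, hx1, rfl⟩ := N.spanning x
    obtain ⟨y0, hy0, y1, hy1, rfl⟩ := N.spanning y
    have h00 := (hom 0 0 x0 hx0 y0 hy0 z).1
    have h01 := (hom 0 1 x0 hx0 y1 hy1 z).1
    have h10 := (hom 1 0 x1 hx1 y0 hy0 z).1
    have h11 := (hom 1 1 x1 hx1 y1 hy1 z).1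
    simp only [map_add, LinearMap.add_apply]
    linear_combination (norm := abel) h00 + h01 + h10 + h11
  · intro x y z
    obtain ⟨x0, hx0, x1, hx1, rfl⟩ := N.spanning x
    obtain ⟨y0, hy0, y1, hy1, rfl⟩ := N.spanning y
    have h00 := (hom 0 0 x0 hx0 y0 hy0 z).2
    have h01 := (hom 0 1 x0 hx0 y1 hy1 z).2
    have h10 := (hom 1 0 x1 hx1 y0 hy0 z).2
    have h11 := (hom 1 1 x1 hx1 y1 hy1 z).2
    simp only [map_add, LinearMap.add_apply]
    linear_combination (norm := abel) h00 + h01 + h10 + h11
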